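/- arXiv:2011.04829 — 2 statements merged into one kernel-verified Lean document; each statement's English description precedes it below -/
import Mathlib

section
/- Let X be a real n×k matrix with singular value decomposition X = U D Vᵀ, where U is an n×k real matrix with UᵀU equal to the k×k identity, V is a k×k real orthogonal matrix, and D is the k×k diagonal matrix with diagonal entries λ₁,…,λ_k. Let y ∈ ℝⁿ, γ ∈ ℝ, and for σ₁ > 0, σ₂ > 0, β ∈ ℝᵏ define q(σ₁,σ₂,β) = σ₁^{−(k+1)} σ₂^{−n} exp( −γ (log σ₁)² − σ₂²/2 − ‖Xβ − y‖²/(2σ₂²) − ‖β‖²/(2σ₁²) ). Set w = VᵀXᵀy, a₂ᵢ = λᵢ²/(2σ₂²) + 1/(2σ₁²), a₁ᵢ = wᵢ/σ₂², and a₀ = −yᵀy/(2σ₂²). Then for all σ₁, σ₂ > 0, the Lebesgue integral ∫_{ℝᵏ} q(σ₁,σ₂,β) dβ equals q̃(σ₁,σ₂) := σ₁^{−(k+1)} σ₂^{−n} exp( −γ (log σ₁)² − σ₂²/2 + a₀ + ∑_{i=1}^{k} a₁ᵢ²/(4 a₂ᵢ) ) · (2π)^{k/2} · ∏_{i=1}^{k}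 (2 a₂ᵢ)^{−1/2}. -/
/-!
Substituting `β = V α`, which preserves Lebesgue measure on `ℝᵏ`, the decomposition
`X V = U D` with `Uᵀ U = 1` turns `‖X β - y‖²` into `∑ λᵢ² αᵢ² - 2 ∑ wᵢ αᵢ + yᵀ y`, while
`‖β‖² = ∑ αᵢ²`. The exponent becomes `a₀ + ∑ (-a₂ᵢ αᵢ² + a₁ᵢ αᵢ)`, so the integral factors into
`k` one-dimensional Gaussian integrals, each evaluated by completing the square.
-/

open Matrix MeasureTheory Real WithLp

theorem integral_exp_neg_mul_sq_add_mul {a : ℝ} (ha : 0 < a) (c : ℝ) :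
    ∫ x : ℝ, exp (-a * x ^ 2 + c * x) = exp (c ^ 2 / (4 * a)) * √(π / a) := by
  have hsquare (x : ℝ) : -a * x ^ 2 + c * x = c ^ 2 / (4 * a) + -a * (x - c / (2 * a)) ^ 2 := by
    field_simp; ring
  simp_rw [hsquare, exp_add]
  rw [integral_const_mul, integral_sub_right_eq_self (fun x ↦ exp (-a * x ^ 2)), integral_gaussian]

theorem integral_euclideanSpace_exp_sum_neg_mul_sq_add_mul {ι : Type*} [Fintype ι]
    {a : ι → ℝ} (ha : ∀ i, 0 < a i) (c : ι → ℝ) :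
    ∫ x : EuclideanSpace ℝ ι, exp (∑ i, (-a i * x i ^ 2 + c i * x i))
      = exp (∑ i, c i ^ 2 / (4 * a i)) * (2 * π) ^ ((Fintype.card ι : ℝ) / 2)
          * ∏ i, (2 * a i) ^ (-(1 / 2 : ℝ)) := by
  have hsqrt (i : ι) : √(π / a i) = √(2 * π) * (2 * a i) ^ (-(1 / 2 : ℝ)) := by
    rw [rpow_neg (by linarith [ha i]), ← sqrt_eq_rpow, ← div_eq_mul_inv,
      ← sqrt_div (by positivity), mul_div_mul_left _ _ two_ne_zero]
  have hpow : √(2 * π) ^ Fintype.card ι = (2 * π) ^ ((Fintype.card ι : ℝ) / 2) := by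
    rw [sqrt_eq_rpow, ← rpow_natCast, ← rpow_mul (by positivity), one_div_mul_eq_div]
  rw [← (EuclideanSpace.volume_preserving_symm_measurableEquiv_toLp ι).symm.integral_comp']
  simp only [MeasurableEquiv.symm_symm, MeasurableEquiv.coe_toLp, ofLp_toLp, exp_sum]
  rw [integral_fintype_prod_volume_eq_prod (fun i x ↦ exp (-a i * x ^ 2 + c i * x))]
  simp only [integral_exp_neg_mul_sq_add_mul (ha _), hsqrt, Finset.prod_mul_distrib,
    Finset.prod_const, Finset.card_univ, hpow]
  ring

namespace Matrix

variable {ι m R : Type*} [Fintype ι] [Fintype m]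

theorem mulVec_dotProduct_mulVec [CommSemiring R] (A : Matrix m ι R) (x z : ι → R) :
    A *ᵥ x ⬝ᵥ A *ᵥ z = (Aᵀ * A) *ᵥ x ⬝ᵥ z := by
  rw [dotProduct_mulVec, ← mulVec_transpose, mulVec_mulVec]

variable [DecidableEq ι]

theorem inner_toLp_mulVec_of_transpose_mul_self {U : Matrix m ι ℝ} (hU : Uᵀ * U = 1)
    (x z : ι → ℝ) :
    inner ℝ (toLp 2 (U *ᵥ x)) (toLp 2 (U *ᵥ z)) = inner ℝ (toLp 2 x) (toLp 2 z) := by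
  simp only [EuclideanSpace.inner_toLp_toLp, star_trivial, mulVec_dotProduct_mulVec, hU,
    one_mulVec]

theorem norm_toLp_mulVec_of_transpose_mul_self {U : Matrix m ι ℝ} (hU : Uᵀ * U = 1)
    (x : ι → ℝ) : ‖toLp 2 (U *ᵥ x)‖ = ‖toLp 2 x‖ := by
  rw [norm_eq_sqrt_real_inner, norm_eq_sqrt_real_inner, inner_toLp_mulVec_of_transpose_mul_self hU]

theorem integral_comp_toLp_mulVec_of_transpose_mul_self {E : Type*} [NormedAddCommGroup E]
    [NormedSpace ℝ E] {V : Matrix ι ι ℝ} (hV : Vᵀ * V = 1) (g : EuclideanSpace ℝ ι → E) :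
    ∫ x : EuclideanSpace ℝ ι, g (toLp 2 (V *ᵥ ofLp x)) = ∫ x, g x :=
  integral_comp ((LinearMap.isometryOfInner (toLpLin 2 2 V) fun x z ↦
    inner_toLp_mulVec_of_transpose_mul_self hV x z).toLinearIsometryEquiv rfl) g

theorem norm_toLp_mulVec_mulVec_sub_sq_of_svd {X U : Matrix m ι ℝ} {V : Matrix ι ι ℝ}
    {lam : ι → ℝ} (hU : Uᵀ * U = 1) (hV : Vᵀ * V = 1) (hX : X = U * diagonal lam * Vᵀ)
    (α : ι → ℝ) (y : EuclideanSpace ℝ m) :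
    ‖toLp 2 (X *ᵥ (V *ᵥ α)) - y‖ ^ 2
      = ∑ i, lam i ^ 2 * α i ^ 2 - 2 * ∑ i, (Vᵀ *ᵥ (Xᵀ *ᵥ ofLp y)) i * α i + ofLp y ⬝ᵥ ofLp y := by
  have hXV : X *ᵥ (V *ᵥ α) = U *ᵥ (diagonal lam *ᵥ α) := by
    rw [mulVec_mulVec, mulVec_mulVec, hX, Matrix.mul_assoc, hV, Matrix.mul_one]
  have hcross : inner ℝ (toLp 2 (X *ᵥ (V *ᵥ α))) y = ∑ i, (Vᵀ *ᵥ (Xᵀ *ᵥ ofLp y)) i * α i := by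
    rw [EuclideanSpace.inner_eq_star_dotProduct, star_trivial, ofLp_toLp, dotProduct_mulVec,
      dotProduct_mulVec, ← mulVec_transpose, ← mulVec_transpose]
    rfl
  rw [norm_sub_sq_real, hcross, hXV, norm_toLp_mulVec_of_transpose_mul_self hU,
    EuclideanSpace.real_norm_sq_eq, ← real_inner_self_eq_norm_sq y,
    EuclideanSpace.inner_eq_star_dotProduct, star_trivial]
  simp only [mulVec_diagonal, mul_pow]

end Matrix

theorem stmt5_general
    (n k : ℕ)
    (X U : Matrix (Fin n) (Fin k) ℝ)
    (V : Matrix (Fin k) (Fin k) ℝ)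
    (lam : Fin k → ℝ)
    (hU : Uᵀ * U = 1)
    (hV₁ : Vᵀ * V = 1)
    (hX : X = U * Matrix.diagonal lam * Vᵀ)
    (y : EuclideanSpace ℝ (Fin n)) (γ : ℝ)
    (σ₁ σ₂ : ℝ) (hσ₁ : 0 < σ₁)
    (w : Fin k → ℝ)
    (hw : w = Vᵀ.mulVec (Xᵀ.mulVec y))
    (a₂ a₁ : Fin k → ℝ) (a₀ : ℝ)
    (ha₂ : ∀ i, a₂ i = lam i ^ 2 / (2 * σ₂ ^ 2) + 1 / (2 * σ₁ ^ 2))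
    (ha₁ : ∀ i, a₁ i = w i / σ₂ ^ 2)
    (ha₀ : a₀ = -(y ⬝ᵥ y) / (2 * σ₂ ^ 2)) :
    (∫ β : EuclideanSpace ℝ (Fin k),
        σ₁ ^ (-((k : ℤ) + 1)) * σ₂ ^ (-(n : ℤ)) *
          Real.exp (-γ * Real.log σ₁ ^ 2 - σ₂ ^ 2 / 2
            - ‖(EuclideanSpace.equiv (Fin n) ℝ).symm (X.mulVec β) - y‖ ^ 2 / (2 * σ₂ ^ 2)
            - ‖β‖ ^ 2 / (2 * σ₁ ^ 2)))
      = σ₁ ^ (-((k : ℤ) + 1)) * σ₂ ^ (-(n : ℤ)) *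
          Real.exp (-γ * Real.log σ₁ ^ 2 - σ₂ ^ 2 / 2 + a₀ + ∑ i, a₁ i ^ 2 / (4 * a₂ i)) *
          (2 * Real.pi) ^ ((k : ℝ) / 2) *
          ∏ i, (2 * a₂ i) ^ (-(1 / 2 : ℝ)) := by
  have ha₂_pos (i : Fin k) : 0 < a₂ i := by rw [ha₂ i]; positivity
  have hexponent (C : ℝ) (α : Fin k → ℝ) :
      C - ‖toLp 2 (X *ᵥ (V *ᵥ α)) - y‖ ^ 2 / (2 * σ₂ ^ 2) - ‖toLp 2 (V *ᵥ α)‖ ^ 2 / (2 * σ₁ ^ 2)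
        = C + a₀ + ∑ i, (-a₂ i * α i ^ 2 + a₁ i * α i) := by
    have hsum : ∑ i, (-a₂ i * α i ^ 2 + a₁ i * α i) = -(∑ i, lam i ^ 2 * α i ^ 2) / (2 * σ₂ ^ 2)
        - (∑ i, α i ^ 2) / (2 * σ₁ ^ 2) + (∑ i, w i * α i) / σ₂ ^ 2 := by
      simp only [neg_div, Finset.sum_div, ← Finset.sum_neg_distrib, ← Finset.sum_sub_distrib,
        ← Finset.sum_add_distrib, ha₂, ha₁]
      exact Finset.sum_congr rfl fun i _ ↦ by ring
    rw [Matrix.norm_toLp_mulVec_mulVec_sub_sq_of_svd hU hV₁ hX, ← hw,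
      Matrix.norm_toLp_mulVec_of_transpose_mul_self hV₁, EuclideanSpace.real_norm_sq_eq, hsum, ha₀]
    ring
  rw [← Matrix.integral_comp_toLp_mulVec_of_transpose_mul_self hV₁]
  simp only [PiLp.continuousLinearEquiv_symm_apply, hexponent, exp_add]
  rw [integral_const_mul, integral_const_mul,
    integral_euclideanSpace_exp_sum_neg_mul_sq_add_mul ha₂_pos,
    Fintype.card_fin]
  ring

/-- Theorem 290, marginalization of `β`:
`∫_{ℝᵏ} q(σ₁,σ₂,β) dβ = q̃(σ₁,σ₂)`. -/
theorem stmt5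
    (n k : ℕ) (hn : 0 < n) (hk : 0 < k)
    (X U : Matrix (Fin n) (Fin k) ℝ)
    (V : Matrix (Fin k) (Fin k) ℝ)
    (lam : Fin k → ℝ)
    (hU : Uᵀ * U = 1)
    (hV₁ : Vᵀ * V = 1) (hV₂ : V * Vᵀ = 1)
    (hX : X = U * Matrix.diagonal lam * Vᵀ)
    (y : EuclideanSpace ℝ (Fin n)) (γ : ℝ)
    (σ₁ σ₂ : ℝ) (hσ₁ : 0 < σ₁) (hσ₂ : 0 < σ₂)
    (w : Fin k → ℝ)
    (hw : w = Vᵀ.mulVec (Xᵀ.mulVec y))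
    (a₂ a₁ : Fin k → ℝ) (a₀ : ℝ)
    (ha₂ : ∀ i, a₂ i = lam i ^ 2 / (2 * σ₂ ^ 2) + 1 / (2 * σ₁ ^ 2))
    (ha₁ : ∀ i, a₁ i = w i / σ₂ ^ 2)
    (ha₀ : a₀ = -(y ⬝ᵥ y) / (2 * σ₂ ^ 2)) :
    (∫ β : EuclideanSpace ℝ (Fin k),
        σ₁ ^ (-((k : ℤ) + 1)) * σ₂ ^ (-(n : ℤ)) *
          Real.exp (-γ * Real.log σ₁ ^ 2 - σ₂ ^ 2 / 2
            - ‖(EuclideanSpace.equiv (Fin n) ℝ).symm (X.mulVec β) - y‖ ^ 2 / (2 * σ₂ ^ 2)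
            - ‖β‖ ^ 2 / (2 * σ₁ ^ 2)))
      = σ₁ ^ (-((k : ℤ) + 1)) * σ₂ ^ (-(n : ℤ)) *
          Real.exp (-γ * Real.log σ₁ ^ 2 - σ₂ ^ 2 / 2 + a₀ + ∑ i, a₁ i ^ 2 / (4 * a₂ i)) *
          (2 * Real.pi) ^ ((k : ℝ) / 2) *
          ∏ i, (2 * a₂ i) ^ (-(1 / 2 : ℝ)) :=
  stmt5_general n k X U V lam hU hV₁ hX y γ σ₁ σ₂ hσ₁ w hw a₂ a₁ a₀ ha₂ ha₁ ha₀
end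

section
/- Let X be a real n×k matrix with singular value decomposition X = U D Vᵀ, where U is an n×k real matrix with UᵀU equal to the k×k identity, V is a k×k real orthogonal matrix, and D is the k×k diagonal matrix with diagonal entries λ₁,…,λ_k. Let y ∈ ℝⁿ, γ ∈ ℝ, and for σ₁ > 0, σ₂ > 0, β ∈ ℝᵏ define q(σ₁,σ₂,β) = σ₁^{−(k+1)} σ₂^{−n} exp( −γ (log σ₁)² − σ₂²/2 − ‖Xβ − y‖²/(2σ₂²) − ‖β‖²/(2σ₁²) ). Set w = VᵀXᵀy, a₂ᵢ = λᵢ²/(2σ₂²) + 1/(2σ₁²), a₁ᵢ = wᵢ/σ₂², a₀ = −yᵀy/(2σ₂²), q̃(σ₁,σ₂) = σ₁^{−(k+1)} σ₂^{−n} exp( −γ (log σ₁)² − σ₂²/2 + a₀ + ∑_{i=1}^{k} a₁ᵢ²/(4 a₂ᵢ) ) · (2π)^{k/2} · ∏_{i=1}^{k} (2 a₂ᵢ)^{−1/2}, and let μ = V m ∈ ℝᵏ where mᵢ = a₁ᵢ/(2 a₂ᵢ). Then for all σ₁, σ₂ > 0, the matrix-valued Lebesgue integral ∫_{ℝᵏ}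 (β − μ)(β − μ)ᵀ · q(σ₁,σ₂,β) dβ equals q̃(σ₁,σ₂) · V Λ Vᵀ, where Λ is the k×k diagonal matrix with diagonal entries (2 a₂ᵢ)^{−1}. -/
/-!
The substitution `β = V α` preserves Lebesgue measure because `V` is orthogonal, and it
diagonalises the quadratic form in the exponent: since `X V = U D` and `Uᵀ U = 1`, the exponent
becomes `a₀ + ∑ₗ (-a₂ₗ αₗ² + a₁ₗ αₗ)`. The density is therefore a product of one-dimensional
Gaussians centred at `mₗ = a₁ₗ / (2 a₂ₗ)`, and by Fubini the centred moments
`∫ (αₚ - mₚ) (α_q - m_q)` vanish for `p ≠ q` and equal `(2 a₂ₚ)⁻¹` times the total mass for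
`p = q`. As `β - μ = V (α - m)`, this diagonal covariance becomes `V Λ Vᵀ`.
-/

open Matrix MeasureTheory Real

theorem integrable_pow_mul_exp_neg_mul_sq {a : ℝ} (ha : 0 < a) (j : ℕ) :
    Integrable fun x : ℝ => x ^ j * exp (-a * x ^ 2) := by
  simpa [Real.rpow_natCast] using
    integrable_rpow_mul_exp_neg_mul_sq ha (s := j) (neg_one_lt_zero.trans_le j.cast_nonneg)

theorem integral_mul_exp_neg_mul_sq (a : ℝ) : ∫ x : ℝ, x * exp (-a * x ^ 2) = 0 := by
  have h := integral_neg_eq_self (fun x : ℝ => x * exp (-a * x ^ 2)) volume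
  simp only [neg_sq, neg_mul, integral_neg] at h ⊢
  linarith

theorem integral_sq_mul_exp_neg_mul_sq {a : ℝ} (ha : 0 < a) :
    ∫ x : ℝ, x ^ 2 * exp (-a * x ^ 2) = (2 * a)⁻¹ * √(π / a) := by
  -- integration by parts against `x * exp (-a * x ^ 2)`
  have hderiv : ∀ x : ℝ, HasDerivAt (fun x => x * exp (-a * x ^ 2))
      (exp (-a * x ^ 2) - 2 * a * (x ^ 2 * exp (-a * x ^ 2))) x := fun x => by
    refine ((hasDerivAt_id' x).mul ((hasDerivAt_pow 2 x).const_mul (-a)).exp).congr_deriv ?_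
    ring
  have h := integral_eq_zero_of_hasDerivAt_of_integrable hderiv
    ((integrable_exp_neg_mul_sq ha).sub ((integrable_pow_mul_exp_neg_mul_sq ha 2).const_mul _))
    (integrable_mul_exp_neg_mul_sq ha)
  rw [integral_sub (integrable_exp_neg_mul_sq ha)
    ((integrable_pow_mul_exp_neg_mul_sq ha 2).const_mul _), integral_const_mul,
    integral_gaussian, sub_eq_zero] at h
  rw [h, ← mul_assoc, inv_mul_cancel₀ (by positivity), one_mul]

theorem exp_neg_mul_sq_add_mul {a : ℝ} (ha : a ≠ 0) (b t : ℝ) :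
    exp (-a * t ^ 2 + b * t) = exp (b ^ 2 / (4 * a)) * exp (-a * (t - b / (2 * a)) ^ 2) := by
  rw [← exp_add]
  congr 1
  field_simp
  ring

theorem integral_sub_pow_mul_exp_neg_mul_sq_add_mul {a : ℝ} (ha : a ≠ 0) (b : ℝ) (j : ℕ) :
    ∫ t : ℝ, (t - b / (2 * a)) ^ j * exp (-a * t ^ 2 + b * t)
      = exp (b ^ 2 / (4 * a)) * ∫ u : ℝ, u ^ j * exp (-a * u ^ 2) := by
  simp_rw [exp_neg_mul_sq_add_mul ha, mul_left_comm _ (exp _), integral_const_mul]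
  rw [integral_sub_right_eq_self (fun u => u ^ j * exp (-a * u ^ 2))]

theorem integrable_sub_pow_mul_exp_neg_mul_sq_add_mul {a : ℝ} (ha : 0 < a) (b : ℝ) (j : ℕ) :
    Integrable fun t : ℝ => (t - b / (2 * a)) ^ j * exp (-a * t ^ 2 + b * t) := by
  simp_rw [exp_neg_mul_sq_add_mul ha.ne', mul_left_comm _ (exp _)]
  exact ((integrable_pow_mul_exp_neg_mul_sq ha j).comp_sub_right _).const_mul _

theorem mul_mul_prod_eq_prod_pow_single_add_single {ι M : Type*} [Fintype ι] [DecidableEq ι]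
    [CommMonoid M] (x g : ι → M) (p q : ι) :
    x p * x q * ∏ l, g l = ∏ l, x l ^ (Pi.single p 1 + Pi.single q 1 : ι → ℕ) l * g l := by
  simp only [Finset.prod_mul_distrib, Pi.add_apply, pow_add, Pi.single_apply, pow_ite, pow_one,
    pow_zero, Finset.prod_ite_eq', Finset.mem_univ, if_true]

section ProductGaussian

variable {ι : Type*} [Fintype ι] [DecidableEq ι] {a : ι → ℝ} (b : ι → ℝ)

-- A product of functions of one coordinate each, so that Fubini applies.
theorem sub_mul_sub_mul_prod_exp_eq_prod (p q : ι) :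
    (fun α : ι → ℝ => (α p - b p / (2 * a p)) * (α q - b q / (2 * a q)) *
      ∏ l, exp (-a l * α l ^ 2 + b l * α l))
      = fun α => ∏ l, (α l - b l / (2 * a l)) ^ (Pi.single p 1 + Pi.single q 1 : ι → ℕ) l *
          exp (-a l * α l ^ 2 + b l * α l) :=
  funext fun α => mul_mul_prod_eq_prod_pow_single_add_single (fun l => α l - b l / (2 * a l)) _ p q

theorem integrable_sub_mul_sub_mul_prod_exp (ha : ∀ l, 0 < a l) (p q : ι) :
    Integrable fun α : ι → ℝ => (α p - b p / (2 * a p)) * (α q - b q / (2 * a q)) *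
      ∏ l, exp (-a l * α l ^ 2 + b l * α l) := by
  rw [sub_mul_sub_mul_prod_exp_eq_prod]
  exact Integrable.fintype_prod fun l => integrable_sub_pow_mul_exp_neg_mul_sq_add_mul (ha l) _ _

theorem integral_sub_mul_sub_mul_prod_exp (ha : ∀ l, 0 < a l) (p q : ι) :
    ∫ α : ι → ℝ, (α p - b p / (2 * a p)) * (α q - b q / (2 * a q)) *
        ∏ l, exp (-a l * α l ^ 2 + b l * α l)
      = if p = q then (2 * a p)⁻¹ * ∏ l, exp (b l ^ 2 / (4 * a l)) * √(π / a l) else 0 := by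
  rw [sub_mul_sub_mul_prod_exp_eq_prod, integral_fintype_prod_volume_eq_prod
    (fun l t => (t - b l / (2 * a l)) ^ _ * exp (-a l * t ^ 2 + b l * t))]
  simp_rw [integral_sub_pow_mul_exp_neg_mul_sq_add_mul (ha _).ne']
  split_ifs with hpq
  · subst hpq
    have hfactor : ∀ l, exp (b l ^ 2 / (4 * a l)) *
        ∫ u, u ^ (Pi.single p 1 + Pi.single p 1 : ι → ℕ) l * exp (-a l * u ^ 2)
          = (if l = p then (2 * a l)⁻¹ else 1) * (exp (b l ^ 2 / (4 * a l)) * √(π / a l)) := by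
      intro l
      by_cases hlp : l = p
      · subst hlp
        simp only [Pi.add_apply, Pi.single_eq_same, if_true, integral_sq_mul_exp_neg_mul_sq (ha l)]
        ring
      · simp only [Pi.add_apply, Pi.single_eq_of_ne hlp, add_zero, pow_zero, one_mul, if_neg hlp,
          integral_gaussian]
    rw [Finset.prod_congr rfl fun l _ => hfactor l, Finset.prod_mul_distrib, Finset.prod_ite_eq',
      if_pos (Finset.mem_univ p)]
  · refine Finset.prod_eq_zero (Finset.mem_univ p) ?_
    simp only [Pi.add_apply, Pi.single_eq_same, Pi.single_eq_of_ne hpq, add_zero, pow_one,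
      integral_mul_exp_neg_mul_sq, mul_zero]

theorem integral_mulVec_sub_mul_mulVec_sub_mul_prod_exp {κ : Type*} (V : Matrix κ ι ℝ)
    (ha : ∀ l, 0 < a l) (i j : κ) :
    ∫ α : ι → ℝ, (V *ᵥ (α - fun l => b l / (2 * a l))) i * (V *ᵥ (α - fun l => b l / (2 * a l))) j *
        ∏ l, exp (-a l * α l ^ 2 + b l * α l)
      = (V * diagonal (fun l => (2 * a l)⁻¹) * Vᵀ) i j *
          ∏ l, exp (b l ^ 2 / (4 * a l)) * √(π / a l) := by
  have hexpand : ∀ α : ι → ℝ,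
      (V *ᵥ (α - fun l => b l / (2 * a l))) i * (V *ᵥ (α - fun l => b l / (2 * a l))) j *
        ∏ l, exp (-a l * α l ^ 2 + b l * α l)
      = ∑ p, ∑ q, V i p * V j q * ((α p - b p / (2 * a p)) * (α q - b q / (2 * a q)) *
          ∏ l, exp (-a l * α l ^ 2 + b l * α l)) := fun α => by
    simp only [mulVec, dotProduct, Pi.sub_apply]
    rw [Finset.sum_mul_sum, Finset.sum_mul]
    exact Finset.sum_congr rfl fun p _ => by
      rw [Finset.sum_mul]
      exact Finset.sum_congr rfl fun q _ => by ring
  have hint := integrable_sub_mul_sub_mul_prod_exp b ha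
  simp_rw [hexpand]
  rw [integral_finsetSum _ fun p _ => integrable_finsetSum _ fun q _ => (hint p q).const_mul _]
  simp_rw [integral_finsetSum _ fun q _ => (hint _ q).const_mul _, integral_const_mul,
    integral_sub_mul_sub_mul_prod_exp b ha, mul_ite, mul_zero, Finset.sum_ite_eq,
    Finset.mem_univ, if_true]
  rw [Matrix.mul_apply, Finset.sum_mul]
  exact Finset.sum_congr rfl fun p _ => by rw [mul_diagonal, transpose_apply]; ring

end ProductGaussian

theorem integral_comp_toLp_mulVec_of_transpose_mul_self {ι E : Type*} [Fintype ι] [DecidableEq ι]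
    [NormedAddCommGroup E] [NormedSpace ℝ E] (V : Matrix ι ι ℝ) (hV : Vᵀ * V = 1)
    (F : EuclideanSpace ℝ ι → E) :
    ∫ α : ι → ℝ, F (WithLp.toLp 2 (V *ᵥ α)) = ∫ β, F β := by
  have hU : toEuclideanCLM (𝕜 := ℝ) V ∈ unitary _ :=
    Unitary.map_mem _ (Matrix.mem_unitaryGroup_iff'.mpr hV)
  let e := Unitary.linearIsometryEquiv ⟨_, hU⟩
  rw [← e.measurePreserving.integral_comp e.toHomeomorph.measurableEmbedding,
    ← (PiLp.volume_preserving_toLp ι).integral_comp (MeasurableEquiv.toLp 2 _).measurableEmbedding]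
  rfl

theorem prod_exp_mul_sqrt_pi_div {ι : Type*} [Fintype ι] {a : ι → ℝ} (ha : ∀ l, 0 < a l)
    (c : ι → ℝ) :
    ∏ l, exp (c l) * √(π / a l)
      = exp (∑ l, c l) *
          ((2 * π) ^ ((Fintype.card ι : ℝ) / 2) * ∏ l, (2 * a l) ^ (-(1 / 2 : ℝ))) := by
  have hsqrt : ∀ l, √(π / a l) = (2 * π) ^ (1 / 2 : ℝ) * (2 * a l) ^ (-(1 / 2 : ℝ)) := fun l => by
    rw [← mul_div_mul_left π (a l) two_ne_zero, sqrt_div (by positivity), sqrt_eq_rpow,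
      sqrt_eq_rpow, rpow_neg (by linarith [ha l]), div_eq_mul_inv]
  simp_rw [hsqrt, Finset.prod_mul_distrib, ← exp_sum, Finset.prod_const, Finset.card_univ,
    ← rpow_natCast, ← rpow_mul (by positivity : (0 : ℝ) ≤ 2 * π)]
  ring_nf

theorem EuclideanSpace.norm_sq_eq_dotProduct {ι : Type*} [Fintype ι] (x : EuclideanSpace ℝ ι) :
    ‖x‖ ^ 2 = x.ofLp ⬝ᵥ x.ofLp := by
  rw [← real_inner_self_eq_norm_sq, EuclideanSpace.inner_eq_star_dotProduct, star_trivial]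

theorem mulVec_dotProduct_mulVec_of_transpose_mul_self {m n : Type*} [Fintype m] [Fintype n]
    [DecidableEq n] {A : Matrix m n ℝ} (hA : Aᵀ * A = 1) (v w : n → ℝ) :
    A *ᵥ v ⬝ᵥ A *ᵥ w = v ⬝ᵥ w := by
  rw [dotProduct_mulVec, ← vecMul_transpose, vecMul_vecMul, hA, vecMul_one]

section LinearRegression

variable {m ι : Type*} [Fintype m] [Fintype ι] [DecidableEq ι] {X U : Matrix m ι ℝ}
  {V : Matrix ι ι ℝ} {lam : ι → ℝ}

theorem norm_sq_toLp_mulVec_sub (hU : Uᵀ * U = 1) (hV : Vᵀ * V = 1)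
    (hX : X = U * diagonal lam * Vᵀ) (y : EuclideanSpace ℝ m) (α : ι → ℝ) :
    ‖WithLp.toLp 2 (X *ᵥ (V *ᵥ α)) - y‖ ^ 2
      = ∑ l, lam l ^ 2 * α l ^ 2 - 2 * (α ⬝ᵥ Vᵀ *ᵥ (Xᵀ *ᵥ y.ofLp)) + y.ofLp ⬝ᵥ y.ofLp := by
  have hXV : X *ᵥ (V *ᵥ α) = U *ᵥ (diagonal lam *ᵥ α) := by
    rw [mulVec_mulVec, mulVec_mulVec, hX, Matrix.mul_assoc, hV, Matrix.mul_one]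
  have hcross : X *ᵥ (V *ᵥ α) ⬝ᵥ y.ofLp = α ⬝ᵥ Vᵀ *ᵥ (Xᵀ *ᵥ y.ofLp) := by
    rw [mulVec_mulVec, dotProduct_comm, dotProduct_mulVec, ← mulVec_transpose, transpose_mul,
      mulVec_mulVec, dotProduct_comm]
  rw [EuclideanSpace.norm_sq_eq_dotProduct, WithLp.ofLp_sub, sub_dotProduct, dotProduct_sub,
    dotProduct_sub, dotProduct_comm y.ofLp, hcross]
  have hdiag : diagonal lam *ᵥ α ⬝ᵥ diagonal lam *ᵥ α = ∑ l, lam l ^ 2 * α l ^ 2 :=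
    Finset.sum_congr rfl fun l _ => by rw [mulVec_diagonal]; ring
  rw [hXV, mulVec_dotProduct_mulVec_of_transpose_mul_self hU, hdiag]
  ring

theorem sub_norm_sq_div_sub_norm_sq_div_eq (hU : Uᵀ * U = 1) (hV : Vᵀ * V = 1)
    (hX : X = U * diagonal lam * Vᵀ) (y : EuclideanSpace ℝ m) {σ₁ σ₂ a₀ : ℝ} {w a₂ a₁ : ι → ℝ}
    (hw : w = Vᵀ *ᵥ (Xᵀ *ᵥ y.ofLp))
    (ha₂ : ∀ l, a₂ l = lam l ^ 2 / (2 * σ₂ ^ 2) + 1 / (2 * σ₁ ^ 2))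
    (ha₁ : ∀ l, a₁ l = w l / σ₂ ^ 2) (ha₀ : a₀ = -(y.ofLp ⬝ᵥ y.ofLp) / (2 * σ₂ ^ 2))
    (A : ℝ) (α : ι → ℝ) :
    A - ‖WithLp.toLp 2 (X *ᵥ (V *ᵥ α)) - y‖ ^ 2 / (2 * σ₂ ^ 2)
        - ‖WithLp.toLp 2 (V *ᵥ α)‖ ^ 2 / (2 * σ₁ ^ 2)
      = A + a₀ + ∑ l, (-a₂ l * α l ^ 2 + a₁ l * α l) := by
  rw [norm_sq_toLp_mulVec_sub hU hV hX, EuclideanSpace.norm_sq_eq_dotProduct,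
    mulVec_dotProduct_mulVec_of_transpose_mul_self hV, ← hw, ha₀, dotProduct_comm α w]
  simp only [ha₂, ha₁, dotProduct, Finset.sum_add_distrib, neg_mul, add_mul,
    Finset.sum_neg_distrib, div_mul_eq_mul_div, ← Finset.sum_div, one_mul]
  ring_nf

end LinearRegression

theorem stmt9_general
    (n k : ℕ)
    (X U : Matrix (Fin n) (Fin k) ℝ)
    (V : Matrix (Fin k) (Fin k) ℝ)
    (lam : Fin k → ℝ)
    (hU : Uᵀ * U = 1)
    (hV₁ : Vᵀ * V = 1)
    (hX : X = U * Matrix.diagonal lam * Vᵀ)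
    (y : EuclideanSpace ℝ (Fin n)) (γ : ℝ)
    (σ₁ σ₂ : ℝ) (hσ₁ : 0 < σ₁)
    (w : Fin k → ℝ)
    (hw : w = Vᵀ.mulVec (Xᵀ.mulVec y))
    (a₂ a₁ : Fin k → ℝ) (a₀ : ℝ)
    (ha₂ : ∀ i, a₂ i = lam i ^ 2 / (2 * σ₂ ^ 2) + 1 / (2 * σ₁ ^ 2))
    (ha₁ : ∀ i, a₁ i = w i / σ₂ ^ 2)
    (ha₀ : a₀ = -(y ⬝ᵥ y) / (2 * σ₂ ^ 2))
    (m : Fin k → ℝ)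
    (hm : ∀ i, m i = a₁ i / (2 * a₂ i))
    (μ : Fin k → ℝ)
    (hμ : μ = V.mulVec m)
    (Λ : Matrix (Fin k) (Fin k) ℝ)
    (hΛ : Λ = Matrix.diagonal fun i => (2 * a₂ i)⁻¹) :
    ∀ i j : Fin k,
      (∫ β : EuclideanSpace ℝ (Fin k),
          ((β i - μ i) * (β j - μ j)) *
            (σ₁ ^ (-((k : ℤ) + 1)) * σ₂ ^ (-(n : ℤ)) *
              Real.exp (-γ * Real.log σ₁ ^ 2 - σ₂ ^ 2 / 2
                - ‖(EuclideanSpace.equiv (Fin n) ℝ).symm (X.mulVec β) - y‖ ^ 2 / (2 * σ₂ ^ 2)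
                - ‖β‖ ^ 2 / (2 * σ₁ ^ 2))))
        = (σ₁ ^ (-((k : ℤ) + 1)) * σ₂ ^ (-(n : ℤ)) *
            Real.exp (-γ * Real.log σ₁ ^ 2 - σ₂ ^ 2 / 2 + a₀ + ∑ l, a₁ l ^ 2 / (4 * a₂ l)) *
            (2 * Real.pi) ^ ((k : ℝ) / 2) *
            ∏ l, (2 * a₂ l) ^ (-(1 / 2 : ℝ))) * (V * Λ * Vᵀ) i j := by
  intro i j
  have ha₂_pos : ∀ l, 0 < a₂ l := fun l => by rw [ha₂ l]; positivity
  have hm' : m = fun l => a₁ l / (2 * a₂ l) := funext hm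
  set c := σ₁ ^ (-((k : ℤ) + 1)) * σ₂ ^ (-(n : ℤ))
  set A := -γ * Real.log σ₁ ^ 2 - σ₂ ^ 2 / 2
  have hintegrand : ∀ α : Fin k → ℝ,
      ((V *ᵥ α) i - μ i) * ((V *ᵥ α) j - μ j) *
          (c * exp (A - ‖WithLp.toLp 2 (X *ᵥ (V *ᵥ α)) - y‖ ^ 2 / (2 * σ₂ ^ 2)
            - ‖WithLp.toLp 2 (V *ᵥ α)‖ ^ 2 / (2 * σ₁ ^ 2)))
        = c * exp (A + a₀) * ((V *ᵥ (α - m)) i * (V *ᵥ (α - m)) j *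
            ∏ l, exp (-a₂ l * α l ^ 2 + a₁ l * α l)) := fun α => by
    rw [sub_norm_sq_div_sub_norm_sq_div_eq hU hV₁ hX y hw ha₂ ha₁ ha₀, exp_add _ (∑ _, _), exp_sum,
      hμ, mulVec_sub]
    simp only [Pi.sub_apply]
    ring
  rw [← integral_comp_toLp_mulVec_of_transpose_mul_self V hV₁]
  refine (integral_congr_ae (ae_of_all _ hintegrand)).trans ?_
  rw [integral_const_mul, hm', integral_mulVec_sub_mul_mulVec_sub_mul_prod_exp a₁ V ha₂_pos,
    prod_exp_mul_sqrt_pi_div ha₂_pos, Fintype.card_fin, hΛ, exp_add (A + a₀)]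
  ring

/-- conditional form of eqs. (1010), (1020): entrywise,
`∫_{ℝᵏ} (β − μ)(β − μ)ᵀ q(σ₁,σ₂,β) dβ = q̃(σ₁,σ₂) · V Λ Vᵀ`,
where `μ = V m`, `mᵢ = a₁ᵢ/(2a₂ᵢ)`, and `Λ = diag((2a₂ᵢ)⁻¹)`. -/
theorem stmt9
    (n k : ℕ) (hn : 0 < n) (hk : 0 < k)
    (X U : Matrix (Fin n) (Fin k) ℝ)
    (V : Matrix (Fin k) (Fin k) ℝ)
    (lam : Fin k → ℝ)
    (hU : Uᵀ * U = 1)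
    (hV₁ : Vᵀ * V = 1) (hV₂ : V * Vᵀ = 1)
    (hX : X = U * Matrix.diagonal lam * Vᵀ)
    (y : EuclideanSpace ℝ (Fin n)) (γ : ℝ)
    (σ₁ σ₂ : ℝ) (hσ₁ : 0 < σ₁) (hσ₂ : 0 < σ₂)
    (w : Fin k → ℝ)
    (hw : w = Vᵀ.mulVec (Xᵀ.mulVec y))
    (a₂ a₁ : Fin k → ℝ) (a₀ : ℝ)
    (ha₂ : ∀ i, a₂ i = lam i ^ 2 / (2 * σ₂ ^ 2) + 1 / (2 * σ₁ ^ 2))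
    (ha₁ : ∀ i, a₁ i = w i / σ₂ ^ 2)
    (ha₀ : a₀ = -(y ⬝ᵥ y) / (2 * σ₂ ^ 2))
    (m : Fin k → ℝ)
    (hm : ∀ i, m i = a₁ i / (2 * a₂ i))
    (μ : Fin k → ℝ)
    (hμ : μ = V.mulVec m)
    (Λ : Matrix (Fin k) (Fin k) ℝ)
    (hΛ : Λ = Matrix.diagonal fun i => (2 * a₂ i)⁻¹) :
    ∀ i j : Fin k,
      (∫ β : EuclideanSpace ℝ (Fin k),
          ((β i - μ i) * (β j - μ j)) *
            (σ₁ ^ (-((k : ℤ) + 1)) * σ₂ ^ (-(n : ℤ)) *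
              Real.exp (-γ * Real.log σ₁ ^ 2 - σ₂ ^ 2 / 2
                - ‖(EuclideanSpace.equiv (Fin n) ℝ).symm (X.mulVec β) - y‖ ^ 2 / (2 * σ₂ ^ 2)
                - ‖β‖ ^ 2 / (2 * σ₁ ^ 2))))
        = (σ₁ ^ (-((k : ℤ) + 1)) * σ₂ ^ (-(n : ℤ)) *
            Real.exp (-γ * Real.log σ₁ ^ 2 - σ₂ ^ 2 / 2 + a₀ + ∑ l, a₁ l ^ 2 / (4 * a₂ l)) *
            (2 * Real.pi) ^ ((k : ℝ) / 2) *
            ∏ l, (2 * a₂ l) ^ (-(1 / 2 : ℝ))) * (V * Λ * Vᵀ) i j :=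
  stmt9_general n k X U V lam hU hV₁ hX y γ σ₁ σ₂ hσ₁ w hw a₂ a₁ a₀ ha₂ ha₁ ha₀ m hm μ hμ Λ hΛ
end
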